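/- arXiv:2509.12183 — 4 statements merged into one kernel-verified Lean document; each statement's English description precedes it below -/
import Mathlib

section
/- Suppose an assortment A ⊆ N with |A| = K maximizes Σ_{i ∈ A} f_i over all K-subsets of N (i.e., A consists of the top-K products by order frequency). Let α ∈ [0,1] satisfy: for every i ∈ A, the demand of the single-item order {i} is at least α · f_i. Then f(A) ≥ α · f(B) for every B ⊆ N with |B| ≤ K. That is, the Top-K algorithm is an α-approximation. -/
/-- The Top-K algorithm (by order frequency) is an `α`-approximation, where `α` lower
bounds the ratio of single-item demand to order frequency among the selected products. -/
theorem topK_alpha_approximation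
    (N O : Finset ℕ) (D : ℕ → ℝ) (So : ℕ → Finset ℕ)
    (hD : ∀ o ∈ O, 0 ≤ D o)
    (hSo : ∀ o ∈ O, So o ⊆ N)
    (hne : ∀ o ∈ O, (So o).Nonempty)
    (K : ℕ) (A : Finset ℕ) (hA : A ⊆ N) (hAcard : A.card = K)
    -- A maximizes the sum of order frequencies over K-subsets of N
    (hmax : ∀ B ⊆ N, B.card = K →
      ∑ i ∈ B, ∑ o ∈ O.filter (fun o => i ∈ So o), D o
        ≤ ∑ i ∈ A, ∑ o ∈ O.filter (fun o => i ∈ So o), D o)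
    (α : ℝ) (hα0 : 0 ≤ α) (hα1 : α ≤ 1)
    -- each selected product's single-item demand is at least α times its frequency
    (hsingle : ∀ i ∈ A,
      α * (∑ o ∈ O.filter (fun o => i ∈ So o), D o)
        ≤ ∑ o ∈ O.filter (fun o => So o = {i}), D o) :
    ∀ B ⊆ N, B.card ≤ K →
      α * (∑ o ∈ O.filter (fun o => So o ⊆ B), D o)
        ≤ ∑ o ∈ O.filter (fun o => So o ⊆ A), D o := by
  intro B hB hBcard
  have hfnn : ∀ i, (0:ℝ) ≤ ∑ o ∈ O.filter (fun o => i ∈ So o), D o :=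
    fun i => Finset.sum_nonneg fun o ho => hD o (Finset.mem_filter.mp ho).1
  have hKN : K ≤ N.card := hAcard ▸ Finset.card_le_card hA
  obtain ⟨B', hBB', hB'N, hB'card⟩ := Finset.exists_subsuperset_card_eq hB hBcard hKN
  have step1 : ∑ o ∈ O.filter (fun o => So o ⊆ B), D o
      ≤ ∑ i ∈ B, ∑ o ∈ O.filter (fun o => i ∈ So o), D o := by
    rw [Finset.sum_filter]
    rw [Finset.sum_congr rfl (fun i (_ : i ∈ B) =>
      Finset.sum_filter (fun o => i ∈ So o) D), Finset.sum_comm]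
    apply Finset.sum_le_sum
    intro o ho
    by_cases h : So o ⊆ B
    · simp only [h, if_true]
      obtain ⟨i, hi⟩ := hne o ho
      calc D o = if i ∈ So o then D o else 0 := by simp [hi]
        _ ≤ ∑ j ∈ B, if j ∈ So o then D o else 0 :=
          Finset.single_le_sum (f := fun j => if j ∈ So o then D o else 0) (fun j _ => by
            by_cases hj : j ∈ So o <;> simp [hj, hD o ho]) (h hi)
    · simp only [h, if_false]
      exact Finset.sum_nonneg fun j _ => by
        by_cases hj : j ∈ So o <;> simp [hj, hD o ho]
  have step4 : ∑ i ∈ A, ∑ o ∈ O.filter (fun o => So o = {i}), D o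
      ≤ ∑ o ∈ O.filter (fun o => So o ⊆ A), D o := by
    rw [← Finset.sum_biUnion (by
      intro i hi j hj hij
      simp only [Finset.disjoint_left, Finset.mem_filter]
      rintro o ⟨_, h1⟩ ⟨_, h2⟩
      exact hij (Finset.singleton_injective (h1.symm.trans h2)))]
    apply Finset.sum_le_sum_of_subset_of_nonneg
    · intro o ho
      obtain ⟨i, hiA, ho'⟩ := Finset.mem_biUnion.mp ho
      obtain ⟨hoO, hso⟩ := Finset.mem_filter.mp ho'
      exact Finset.mem_filter.mpr ⟨hoO, by rw [hso]; simpa using hiA⟩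
    · intro o ho _
      exact hD o (Finset.mem_filter.mp ho).1
  calc α * ∑ o ∈ O.filter (fun o => So o ⊆ B), D o
      ≤ α * ∑ i ∈ B, ∑ o ∈ O.filter (fun o => i ∈ So o), D o :=
        mul_le_mul_of_nonneg_left step1 hα0
    _ ≤ α * ∑ i ∈ B', ∑ o ∈ O.filter (fun o => i ∈ So o), D o :=
        mul_le_mul_of_nonneg_left
          (Finset.sum_le_sum_of_subset_of_nonneg hBB' fun i _ _ => hfnn i) hα0
    _ ≤ α * ∑ i ∈ A, ∑ o ∈ O.filter (fun o => i ∈ So o), D o :=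
        mul_le_mul_of_nonneg_left (hmax B' hB'N hB'card) hα0
    _ = ∑ i ∈ A, α * ∑ o ∈ O.filter (fun o => i ∈ So o), D o := Finset.mul_sum ..
    _ ≤ ∑ i ∈ A, ∑ o ∈ O.filter (fun o => So o = {i}), D o :=
        Finset.sum_le_sum hsingle
    _ ≤ ∑ o ∈ O.filter (fun o => So o ⊆ A), D o := step4
end

section
/- When removing a single product j of minimum order frequency from the current surviving set S (with m = |S| products and all frequencies computed over surviving orders), the demand lost is at most the average: f(S) − f(S \ {j}) ≤ (1/m) Σ_{i ∈ S} f_i^S ≤ (max_o |S_o| / m) · f(S), where f_i^S = Σ_{o : S_o ⊆ S, i ∈ S_o} D_o, assuming every surviving order has S_o ⊆ S and |S_o| ≤ max_o |S_o|. -/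
/-- Removing a single product `j` of minimum order frequency from the surviving
set `S` loses at most the average frequency, which is at most
`(max_o |S_o| / |S|) · f(S)`. -/
theorem reverse_exclude_loss_bound
    (N O : Finset ℕ) (D : ℕ → ℝ) (So : ℕ → Finset ℕ)
    (hD : ∀ o ∈ O, 0 ≤ D o)
    (hSo : ∀ o ∈ O, So o ⊆ N)
    (hne : ∀ o ∈ O, (So o).Nonempty)
    (S : Finset ℕ) (hS : S ⊆ N)
    (L : ℕ) (hL : ∀ o ∈ O, So o ⊆ S → (So o).card ≤ L)
    (j : ℕ) (hj : j ∈ S)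
    -- j has minimum order frequency among the surviving orders
    (hmin : ∀ i ∈ S,
      ∑ o ∈ O.filter (fun o => So o ⊆ S ∧ j ∈ So o), D o
        ≤ ∑ o ∈ O.filter (fun o => So o ⊆ S ∧ i ∈ So o), D o) :
    (∑ o ∈ O.filter (fun o => So o ⊆ S), D o)
        - (∑ o ∈ O.filter (fun o => So o ⊆ S \ {j}), D o)
      ≤ (∑ i ∈ S, ∑ o ∈ O.filter (fun o => So o ⊆ S ∧ i ∈ So o), D o) / S.card ∧
    (∑ i ∈ S, ∑ o ∈ O.filter (fun o => So o ⊆ S ∧ i ∈ So o), D o) / S.card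
      ≤ ((L : ℝ) / S.card) * ∑ o ∈ O.filter (fun o => So o ⊆ S), D o := by
  have hm : (0:ℝ) < S.card := by
    exact_mod_cast Finset.card_pos.mpr ⟨j, hj⟩
  constructor
  · -- loss = f_j^S
    have hsplit : (∑ o ∈ O.filter (fun o => So o ⊆ S), D o)
        - (∑ o ∈ O.filter (fun o => So o ⊆ S \ {j}), D o)
        = ∑ o ∈ O.filter (fun o => So o ⊆ S ∧ j ∈ So o), D o := by
      have h1 : O.filter (fun o => So o ⊆ S)
          = O.filter (fun o => So o ⊆ S ∧ j ∈ So o)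
            ∪ O.filter (fun o => So o ⊆ S \ {j}) := by
        ext o
        simp only [Finset.mem_filter, Finset.mem_union]
        constructor
        · rintro ⟨ho, hsub⟩
          by_cases hjo : j ∈ So o
          · exact Or.inl ⟨ho, hsub, hjo⟩
          · refine Or.inr ⟨ho, fun x hx => Finset.mem_sdiff.mpr ⟨hsub hx, ?_⟩⟩
            simp only [Finset.mem_singleton]
            rintro rfl; exact hjo hx
        · rintro (⟨ho, hsub, _⟩ | ⟨ho, hsub⟩)
          · exact ⟨ho, hsub⟩
          · exact ⟨ho, fun x hx => (Finset.mem_sdiff.mp (hsub hx)).1⟩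
      have h2 : Disjoint (O.filter (fun o => So o ⊆ S ∧ j ∈ So o))
          (O.filter (fun o => So o ⊆ S \ {j})) := by
        rw [Finset.disjoint_filter]
        rintro o _ ⟨_, hjo⟩ hsub
        have := hsub hjo
        simp at this
      rw [h1, Finset.sum_union h2]
      ring
    rw [hsplit]
    rw [le_div_iff₀ hm]
    calc (∑ o ∈ O.filter (fun o => So o ⊆ S ∧ j ∈ So o), D o) * S.card
        = ∑ _i ∈ S, ∑ o ∈ O.filter (fun o => So o ⊆ S ∧ j ∈ So o), D o := by
          rw [Finset.sum_const, nsmul_eq_mul, mul_comm]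
      _ ≤ ∑ i ∈ S, ∑ o ∈ O.filter (fun o => So o ⊆ S ∧ i ∈ So o), D o :=
          Finset.sum_le_sum hmin
  · rw [div_le_iff₀ hm]
    have heq : ((L:ℝ) / S.card) * (∑ o ∈ O.filter (fun o => So o ⊆ S), D o) * S.card
        = (L:ℝ) * ∑ o ∈ O.filter (fun o => So o ⊆ S), D o := by
      field_simp
    rw [heq]
    have hswap : (∑ i ∈ S, ∑ o ∈ O.filter (fun o => So o ⊆ S ∧ i ∈ So o), D o)
        = ∑ o ∈ O.filter (fun o => So o ⊆ S), ((So o).card : ℝ) * D o := by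
      have : ∀ i ∈ S, (∑ o ∈ O.filter (fun o => So o ⊆ S ∧ i ∈ So o), D o)
          = ∑ o ∈ (O.filter (fun o => So o ⊆ S)).filter (fun o => i ∈ So o), D o := by
        intro i _
        congr 1
        ext o
        simp [Finset.mem_filter, and_assoc]
      rw [Finset.sum_congr rfl this]
      rw [Finset.sum_comm' (s := S) (t := fun i => (O.filter (fun o => So o ⊆ S)).filter (fun o => i ∈ So o))
        (t' := O.filter (fun o => So o ⊆ S))
        (s' := fun o => S.filter (fun i => i ∈ So o)) (f := fun _ o => D o)]
      · apply Finset.sum_congr rfl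
        intro o ho
        rw [Finset.sum_const, nsmul_eq_mul]
        congr 2
        have hsub := (Finset.mem_filter.mp ho).2
        rw [Finset.filter_mem_eq_inter, Finset.inter_eq_right.mpr hsub]
      · intro i o
        simp only [Finset.mem_filter]
        tauto
    rw [hswap, Finset.mul_sum]
    apply Finset.sum_le_sum
    intro o ho
    have hmem := Finset.mem_filter.mp ho
    exact mul_le_mul_of_nonneg_right (by exact_mod_cast hL o hmem.1 hmem.2)
      (hD o hmem.1)
end

section
/- In the single-product, single-FDC, single-period allocation LP with 0 ≤ c ≤ s, the optimal objective value is c·min(max(I_0 − D_0, 0), max(D_1 − I_1, 0)) + s·(max(D_1 − I_1 − max(I_0 − D_0, 0), 0) + max(D_0 − I_0, 0)). -/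
set_option maxHeartbeats 1000000


/-- Closed form for the optimal value of the single-product, single-FDC,
single-period allocation LP with `0 ≤ c ≤ s`. -/
theorem allocation_lp_closed_form
    (I0 I1 D0 D1 c s : ℝ)
    (hI0 : 0 ≤ I0) (hI1 : 0 ≤ I1) (hD0 : 0 ≤ D0) (hD1 : 0 ≤ D1)
    (hc : 0 ≤ c) (hcs : c ≤ s) :
    IsLeast
      {v : ℝ | ∃ x y0 y1 z0 z1 : ℝ,
        0 ≤ x ∧ 0 ≤ y0 ∧ 0 ≤ y1 ∧ 0 ≤ z0 ∧ 0 ≤ z1 ∧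
        x ≤ I1 ∧ y0 + y1 ≤ I0 ∧ x + y1 + z1 = D1 ∧ y0 + z0 = D0 ∧
        v = c * y1 + s * (z0 + z1)}
      (c * min (max (I0 - D0) 0) (max (D1 - I1) 0)
        + s * (max (D1 - I1 - max (I0 - D0) 0) 0 + max (D0 - I0) 0)) := by
  have hs : 0 ≤ s := le_trans hc hcs
  constructor
  · refine ⟨min I1 D1, min I0 D0,
      min (max (I0 - D0) 0) (max (D1 - I1) 0),
      max (D0 - I0) 0,
      max (D1 - I1 - max (I0 - D0) 0) 0,
      ?_, ?_, ?_, ?_, ?_, ?_, ?_, ?_, ?_, ?_⟩ <;>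
    · simp only [min_def, max_def]
      split_ifs <;> linarith
  · rintro v ⟨x, y0, y1, z0, z1, hx, hy0, hy1, hz0, hz1, hxI, hyI, he1, he2, rfl⟩
    have k1 : z1 + y1 - (D1 - I1) ≥ 0 := by linarith
    have k2 : z0 - (y1 - (I0 - D0)) ≥ 0 := by linarith
    simp only [min_def, max_def]
    split_ifs <;>
      first
        | linarith
        | nlinarith [mul_nonneg hc k1.le, mul_nonneg (sub_nonneg.2 hcs) hz1,
            mul_nonneg hs k2.le, mul_nonneg (sub_nonneg.2 hcs) hy1,
            mul_nonneg hs hz0, mul_nonneg hs hz1, mul_nonneg hc hy1,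
            mul_nonneg (sub_nonneg.2 hcs) k1.le]
end

section
/- The single-period cost function C(I_0, I_1) given by the closed form c·min(max(I_0 − D_0,0), max(D_1 − I_1,0)) + s·(max(D_1 − I_1 − max(I_0 − D_0,0), 0) + max(D_0 − I_0, 0)) is nonincreasing in I_0 and in I_1, and jointly convex in (I_0, I_1), for fixed demands D_0, D_1 ≥ 0 and costs 0 ≤ c ≤ s. -/
private lemma affine_convexOn (S : Set (ℝ × ℝ)) (hS : Convex ℝ S) (d a b : ℝ) :
    ConvexOn ℝ S (fun p : ℝ × ℝ => d + a * p.1 + b * p.2) := by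
  refine ⟨hS, ?_⟩
  intro x hx y hy α β hα hβ hab
  apply le_of_eq
  simp only [Prod.fst_add, Prod.snd_add, Prod.smul_fst, Prod.smul_snd, smul_eq_mul]
  linear_combination (-d) * hab

private lemma hM_aux (x y : ℝ) :
    max (y - max x 0) 0 = max y 0 - min (max x 0) (max y 0) := by
  simp only [max_def, min_def]
  split_ifs <;> linarith

private lemma hK_aux (x y : ℝ) :
    max (y - max x 0) 0 + max (-x) 0 = max (max (y - x) (-x)) 0 := by
  simp only [max_def]
  split_ifs <;> linarith

/-- The single-period cost `C(I₀, I₁)` (in closed form) is componentwise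
nonincreasing and jointly convex on the nonnegative orthant. -/
theorem single_period_cost_monotone_convex
    (D0 D1 c s : ℝ) (hD0 : 0 ≤ D0) (hD1 : 0 ≤ D1) (hc : 0 ≤ c) (hcs : c ≤ s) :
    let C : ℝ → ℝ → ℝ := fun I0 I1 =>
      c * min (max (I0 - D0) 0) (max (D1 - I1) 0)
        + s * (max (D1 - I1 - max (I0 - D0) 0) 0 + max (D0 - I0) 0)
    (∀ I0 I1 I0' I1' : ℝ, 0 ≤ I0 → 0 ≤ I1 → I0 ≤ I0' → I1 ≤ I1' →
        C I0' I1' ≤ C I0 I1) ∧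
    ConvexOn ℝ {p : ℝ × ℝ | 0 ≤ p.1 ∧ 0 ≤ p.2} (fun p => C p.1 p.2) := by
  intro C
  have hCeq : ∀ I0 I1 : ℝ, C I0 I1 =
      c * max (D1 - I1) 0
        + (s - c) * max (max (D1 - I1 - (I0 - D0)) (D0 - I0)) 0
        + c * max (D0 - I0) 0 := by
    intro I0 I1
    have h1 := hM_aux (I0 - D0) (D1 - I1)
    have h2 := hK_aux (I0 - D0) (D1 - I1)
    rw [neg_sub] at h2
    simp only [C]
    linear_combination c * h1 + (s - c) * h2
  constructor
  · intro I0 I1 I0' I1' _ _ h0 h1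
    rw [hCeq, hCeq]
    gcongr <;> linarith
  · simp only [hCeq]
    have hS : Convex ℝ {p : ℝ × ℝ | 0 ≤ p.1 ∧ 0 ≤ p.2} := by
      have : {p : ℝ × ℝ | 0 ≤ p.1 ∧ 0 ≤ p.2} = Set.Ici (0, 0) := by
        ext p; simp [Prod.le_def]
      rw [this]; exact convex_Ici _
    set S := {p : ℝ × ℝ | 0 ≤ p.1 ∧ 0 ≤ p.2}
    have c0 : ConvexOn ℝ S (fun _ : ℝ × ℝ => (0 : ℝ)) := convexOn_const _ hS
    have a1 : ConvexOn ℝ S (fun p : ℝ × ℝ => D1 - p.2) := by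
      have := affine_convexOn S hS D1 0 (-1)
      convert this using 2 with p; ring
    have a2 : ConvexOn ℝ S (fun p : ℝ × ℝ => D1 - p.2 - (p.1 - D0)) := by
      have := affine_convexOn S hS (D1 + D0) (-1) (-1)
      convert this using 2 with p; ring
    have a3 : ConvexOn ℝ S (fun p : ℝ × ℝ => D0 - p.1) := by
      have := affine_convexOn S hS D0 (-1) 0
      convert this using 2 with p; ring
    have m1 : ConvexOn ℝ S (fun p : ℝ × ℝ => max (D1 - p.2) 0) := a1.sup c0
    have m2 : ConvexOn ℝ S
        (fun p : ℝ × ℝ => max (max (D1 - p.2 - (p.1 - D0)) (D0 - p.1)) 0) :=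
      (a2.sup a3).sup c0
    have m3 : ConvexOn ℝ S (fun p : ℝ × ℝ => max (D0 - p.1) 0) := a3.sup c0
    exact ((m1.smul hc).add (m2.smul (by linarith))).add (m3.smul hc)
end
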